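/- arXiv:1601.02308 — 5 statements merged into one kernel-verified Lean document; each statement's English description precedes it below -/
import Mathlib

section
/- Fix c₁, c₂, b₁, b₂ ∈ ℂ and consider the subspace V(c₁,c₂,b₁,b₂) of ℂ⁴ of vectors (u₋, u₊, w₋, w₊) satisfying −c₁u₋ − c₂u₊ + (b₁−1)w₋ + (b₂+1)w₊ = 0 and (b₁+1)u₋ + (b₂−1)u₊ = 0. Then V(c₁,c₂,b₁,b₂) equals the 'separating' subspace {(u₋,u₊,w₋,w₊) : b₋u₋ = a₋w₋ and b₊u₊ = a₊w₊} with a₋ = 0, a₊ ≠ 0, b₋ ≠ 0 if and only if b₁ = b₂ = 1 and c₂ = 2b₊/a₊ (with c₁ arbitrary). -/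
/-- The boundary-condition subspace of the maximal domain of `H₀ + B` coincides with the
separating subspace (Dirichlet at `0⁻`, Robin at `0⁺`, i.e. `a₋ = 0`, `a₊ ≠ 0`, `b₋ ≠ 0`)
iff `b₁ = b₂ = 1` and `c₂ = 2 b₊ / a₊` (with `c₁` arbitrary). -/
theorem separating_representation_iff
    (am ap bm bp : ℝ) (ham : am = 0) (hap : ap ≠ 0) (hbm : bm ≠ 0)
    (c₁ c₂ b₁ b₂ : ℂ) :
    (∀ um up wm wp : ℂ,
        (-c₁ * um - c₂ * up + (b₁ - 1) * wm + (b₂ + 1) * wp = 0 ∧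
          (b₁ + 1) * um + (b₂ - 1) * up = 0)
        ↔ ((bm : ℂ) * um = (am : ℂ) * wm ∧ (bp : ℂ) * up = (ap : ℂ) * wp))
    ↔ (b₁ = 1 ∧ b₂ = 1 ∧ c₂ = 2 * (bp : ℂ) / (ap : ℂ)) := by
  have hapC : (ap : ℂ) ≠ 0 := by exact_mod_cast hap
  have hbmC : (bm : ℂ) ≠ 0 := by exact_mod_cast hbm
  subst ham
  constructor
  · intro h
    have h1 := (h 0 0 1 0).mpr ⟨by push_cast; ring, by push_cast; ring⟩
    have hb1 : b₁ = 1 := by linear_combination h1.1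
    have h2 := (h 0 1 0 ((bp : ℂ) / (ap : ℂ))).mpr
      ⟨by push_cast; ring, by field_simp⟩
    have hb2 : b₂ = 1 := by linear_combination h2.2
    refine ⟨hb1, hb2, ?_⟩
    have e1 := h2.1
    rw [hb1, hb2] at e1
    rw [eq_div_iff hapC]
    field_simp at e1
    linear_combination -e1
  · rintro ⟨hb1, hb2, hc2⟩
    subst hb1 hb2
    intro um up wm wp
    push_cast
    constructor
    · rintro ⟨e1, e2⟩
      have hum : um = 0 := by
        have : (2 : ℂ) * um = 0 := by linear_combination e2
        simpa using this
      subst hum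
      rw [hc2] at e1
      field_simp at e1
      exact ⟨by ring, by linear_combination (-1/2 : ℂ) * e1⟩
    · rintro ⟨e1, e2⟩
      have hum : um = 0 := by simpa [hbmC] using e1
      subst hum
      rw [hc2]
      refine ⟨?_, by ring⟩
      field_simp
      linear_combination -2 * e2
end

section
/- Let b₁ ∈ ℂ with b₁ ≠ ±1, b₂ = \overline{b₁}, and suppose Im[c₁(\overline{b₁}−1) − c₂(b₁+1)] = 0. Set b = (b₁+\overline{b₁})/(\overline{b₁}−b₁+2) and c = (2c₁(\overline{b₁}−1) − 2c₂(b₁+1))/((\overline{b₁}−b₁)² − 4). Then b is well-defined (the denominators are nonzero), c is real, and the subspace of ℂ⁴ defined by −c₁u₋ − c₂u₊ + (b₁−1)w₋ + (b₂+1)w₊ = 0, (b₁+1)u₋ + (b₂−1)u₊ = 0 equals the subspace defined by the interacting boundary conditions with parameters (a,b,c) = (0,b,c): u₊ − u₋ = \overline{b}(u₊+u₋) and w₊ − w₋ = c(u₊+u₋) − b(w₊+w₋). -/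
open ComplexConjugate

private lemma ibc_generic (b₁ t c₁ c₂ um up wm wp : ℂ) (hd : t - b₁ + 2 ≠ 0)
    (hd' : b₁ - t + 2 ≠ 0) (hD : (t - b₁) ^ 2 - 4 ≠ 0) (hbp : b₁ + 1 ≠ 0) :
      (-c₁ * um - c₂ * up + (b₁ - 1) * wm + (t + 1) * wp = 0 ∧
        (b₁ + 1) * um + (t - 1) * up = 0)
      ↔ (up - um = ((b₁ + t) / (b₁ - t + 2)) * (up + um) ∧
          wp - wm =
            ((2 * c₁ * (t - 1) - 2 * c₂ * (b₁ + 1)) / ((t - b₁) ^ 2 - 4)) * (up + um)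
            - ((b₁ + t) / (t - b₁ + 2)) * (wp + wm)) := by
  have hmul : (2:ℂ) * (b₁ - t + 2) * (b₁ + 1) ≠ 0 :=
    mul_ne_zero (mul_ne_zero two_ne_zero hd') hbp
  constructor
  · rintro ⟨h1, h2⟩
    have key' : ((2*(t+1)*wp + 2*(b₁-1)*wm) * (b₁ - t + 2)) * (b₁ + 1)
        = (-(2*c₁*(t-1) - 2*c₂*(b₁+1)) * (up + um)) * (b₁ + 1) := by
      linear_combination (2*(b₁-t+2)*(b₁+1)) * h1
        + (2*(b₁-t+2)*c₁ + (2*c₁*(t-1) - 2*c₂*(b₁+1))) * h2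
    have key := mul_right_cancel₀ hbp key'
    constructor
    · field_simp
      linear_combination (-2 : ℂ) * h2
    · field_simp
      linear_combination (-(t - b₁ + 2)) * key
  · rintro ⟨h1, h2⟩
    rw [div_mul_eq_mul_div, eq_div_iff hd'] at h1
    have e2 : (b₁ + 1) * um + (t - 1) * up = 0 := by
      linear_combination (-1/2 : ℂ) * h1
    refine ⟨?_, e2⟩
    rw [div_mul_eq_mul_div, div_mul_eq_mul_div, sub_eq_iff_eq_add] at h2
    field_simp at h2
    have key2' : ((2*(t+1)*wp + 2*(b₁-1)*wm) * (b₁ - t + 2)) * (t - b₁ + 2)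
        = (-(2*c₁*(t-1) - 2*c₂*(b₁+1)) * (up + um)) * (t - b₁ + 2) := by
      linear_combination -h2
    have key2 := mul_right_cancel₀ hd key2'
    have big : (-c₁ * um - c₂ * up + (b₁ - 1) * wm + (t + 1) * wp)
        * (2*(b₁-t+2)*(b₁+1)) = 0 := by
      linear_combination (b₁+1) * key2
        - (2*(b₁-t+2)*c₁ + (2*c₁*(t-1) - 2*c₂*(b₁+1))) * e2
    rcases mul_eq_zero.mp big with h | h
    · exact h
    · exact absurd h hmul

/-- Case `b₂ = conj b₁`, `b₁ ≠ ±1`: the boundary potential conditions coincide with the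
interacting boundary conditions with parameters `(a,b,c) = (0, b, c)` where
`b = (b₁ + conj b₁)/(conj b₁ - b₁ + 2)` and
`c = (2c₁(conj b₁ - 1) - 2c₂(b₁ + 1))/((conj b₁ - b₁)² - 4)`, which is real. -/
theorem interacting_representation_conj_case
    (b₁ c₁ c₂ : ℂ) (hb1 : b₁ ≠ 1) (hb1' : b₁ ≠ -1)
    (him : (c₁ * (conj b₁ - 1) - c₂ * (b₁ + 1)).im = 0) :
    conj b₁ - b₁ + 2 ≠ 0 ∧
    (conj b₁ - b₁) ^ 2 - 4 ≠ 0 ∧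
    ((2 * c₁ * (conj b₁ - 1) - 2 * c₂ * (b₁ + 1)) / ((conj b₁ - b₁) ^ 2 - 4)).im = 0 ∧
    (∀ um up wm wp : ℂ,
      (-c₁ * um - c₂ * up + (b₁ - 1) * wm + (conj b₁ + 1) * wp = 0 ∧
        (b₁ + 1) * um + (conj b₁ - 1) * up = 0)
      ↔ (up - um = conj ((b₁ + conj b₁) / (conj b₁ - b₁ + 2)) * (up + um) ∧
          wp - wm =
            ((2 * c₁ * (conj b₁ - 1) - 2 * c₂ * (b₁ + 1)) / ((conj b₁ - b₁) ^ 2 - 4))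
              * (up + um)
            - ((b₁ + conj b₁) / (conj b₁ - b₁ + 2)) * (wp + wm))) := by
  have hsub : conj b₁ - b₁ = -((2 * b₁.im : ℝ) * Complex.I) := by
    rw [← Complex.sub_conj]; ring
  have hd : conj b₁ - b₁ + 2 ≠ 0 := by
    intro h
    have := congrArg Complex.re h
    simp [hsub] at this
  have hd' : b₁ - conj b₁ + 2 ≠ 0 := by
    intro h
    have := congrArg Complex.re h
    simp [Complex.sub_conj] at this
  have hDval : (conj b₁ - b₁) ^ 2 - 4 = ((-(2 * b₁.im)^2 - 4 : ℝ) : ℂ) := by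
    rw [hsub]; push_cast
    rw [show (-(2 * (b₁.im:ℂ) * Complex.I))^2 = (2*(b₁.im:ℂ))^2 * Complex.I^2 by ring,
      Complex.I_sq]
    ring
  have hD : (conj b₁ - b₁) ^ 2 - 4 ≠ 0 := by
    rw [hDval, Complex.ofReal_ne_zero]
    nlinarith [sq_nonneg (2 * b₁.im)]
  have hbp : b₁ + 1 ≠ 0 := fun h => hb1' (by linear_combination h)
  have hcim : ((2 * c₁ * (conj b₁ - 1) - 2 * c₂ * (b₁ + 1)) /
      ((conj b₁ - b₁) ^ 2 - 4)).im = 0 := by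
    rw [hDval, Complex.div_ofReal_im,
      show 2 * c₁ * (conj b₁ - 1) - 2 * c₂ * (b₁ + 1)
        = 2 * (c₁ * (conj b₁ - 1) - c₂ * (b₁ + 1)) by ring]
    simp [Complex.mul_im, him]
  refine ⟨hd, hD, hcim, fun um up wm wp => ?_⟩
  have hconj : conj ((b₁ + conj b₁) / (conj b₁ - b₁ + 2))
      = (b₁ + conj b₁) / (b₁ - conj b₁ + 2) := by
    rw [map_div₀]
    simp [map_ofNat]
    ring_nf
  rw [hconj]
  exact ibc_generic b₁ (conj b₁) c₁ c₂ um up wm wp hd hd' hD hbp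
end

section
/- Let b₁, b₂ ∈ ℝ with b₁ ≠ ±1, and suppose the subspace of ℂ⁴ given by −c₁u₋ − c₂u₊ + (b₁−1)w₋ + (b₂+1)w₊ = 0, (b₁+1)u₋ + (b₂−1)u₊ = 0 (with c₁, c₂ ∈ ℝ) coincides with an interacting boundary-condition subspace with parameters a, c ∈ ℝ, b ∈ ℂ, (1+\overline{b})(1−b) − ac ≠ 0 (i.e., u₊−u₋ = a(w₊+w₋) + \overline{b}(u₊+u₋) and w₊−w₋ = c(u₊+u₋) − b(w₊+w₋)). Then necessarily a = 0, b₂ = ±b₁, and b = (b₁+b₂)/2. -/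
open ComplexConjugate

/-- Real boundary potentials: if the boundary-condition subspace of `H₀ + B`, with
`B = c₁δ₋ + c₂δ₊ + b₁δ'₋ + b₂δ'₊` and real parameters `b₁ ≠ ±1`, coincides with an
interacting boundary-condition subspace with parameters `a, c ∈ ℝ`, `b ∈ ℂ`,
`(1 + conj b)(1 - b) - ac ≠ 0`, then `a = 0`, `b₂ = ±b₁` and `b = (b₁+b₂)/2`. -/
theorem real_boundary_potential_interacting
    (b₁ b₂ c₁ c₂ : ℝ) (hb1 : b₁ ≠ 1) (hb1' : b₁ ≠ -1)
    (a c : ℝ) (b : ℂ) (hreg : (1 + conj b) * (1 - b) - (a : ℂ) * (c : ℂ) ≠ 0)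
    (heq : ∀ um up wm wp : ℂ,
      (-(c₁ : ℂ) * um - (c₂ : ℂ) * up + ((b₁ : ℂ) - 1) * wm + ((b₂ : ℂ) + 1) * wp = 0 ∧
        ((b₁ : ℂ) + 1) * um + ((b₂ : ℂ) - 1) * up = 0)
      ↔ (up - um = (a : ℂ) * (wp + wm) + conj b * (up + um) ∧
          wp - wm = (c : ℂ) * (up + um) - b * (wp + wm))) :
    a = 0 ∧ (b₂ = b₁ ∨ b₂ = -b₁) ∧ b = (((b₁ + b₂) / 2 : ℝ) : ℂ) := by
  -- instantiation with s = up+um = 2, t = wp+wm = 0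
  have h1 := (heq (1 - conj b) (1 + conj b) (-(c : ℂ)) (c : ℂ)).mpr ⟨by ring, by ring⟩
  -- instantiation with s = 0, t = 2
  have h2 := (heq (-(a : ℂ)) (a : ℂ) (1 + b) (1 - b)).mpr ⟨by ring, by ring⟩
  have ha : (a : ℂ) * ((b₂ : ℂ) - b₁ - 2) = 0 := by linear_combination h2.2
  -- first: a = 0
  have ha0 : a = 0 := by
    rcases mul_eq_zero.mp ha with h | h
    · exact_mod_cast h
    · exfalso
      have hb2 : (b₂ : ℂ) = (b₁ : ℂ) + 2 := by linear_combination h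
      have : ((b₁ : ℂ) + 1) * 2 = 0 := by linear_combination h1.2 - (1 + conj b) * h
      have : (b₁ : ℂ) = -1 := by linear_combination this / 2
      exact hb1' (by exact_mod_cast this)
  subst ha0
  -- conjugate of h2.1
  have h3 := congrArg (starRingEnd ℂ) h2.1
  simp only [map_add, map_sub, map_mul, map_neg, map_one, Complex.conj_ofReal,
    map_zero, map_ofNat, RingHomCompTriple.comp_apply, RingHom.id_apply,
    Complex.conj_conj] at h3
  -- h3 : conj of (-(c₁)*(-0) - c₂*0 + (b₁-1)*(1+b) + (b₂+1)*(1-b)) = 0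
  push_cast at h3 h1
  have hcb : conj b = (((b₁ + b₂) / 2 : ℝ) : ℂ) := by
    push_cast
    linear_combination (-1/4 : ℂ) * h1.2 + (-1/4 : ℂ) * h3
  have hb : b = (((b₁ + b₂) / 2 : ℝ) : ℂ) := by
    have := congrArg (starRingEnd ℂ) hcb
    rwa [Complex.conj_conj, Complex.conj_ofReal] at this
  refine ⟨rfl, ?_, hb⟩
  -- plug conj b into h1.2
  have hfin : ((b₁ : ℂ) + b₂) * ((b₂ : ℂ) - b₁) = 0 := by
    rw [hcb] at h1
    push_cast at h1
    linear_combination (2 : ℂ) * h1.2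
  have hfin' : (b₁ + b₂) * (b₂ - b₁) = 0 := by exact_mod_cast hfin
  rcases mul_eq_zero.mp hfin' with h | h
  · right; linarith
  · left; linarith
end

section
/- Suppose for some λ₁, λ₂, μ₁, μ₂ ∈ ℂ the vectors satisfy λ₁(−c₁,−c₂,b₁−1,b₂+1) + μ₁(b₁+1,b₂−1,0,0) = (−c,−c,b−1,b+1) and λ₂(−c₁,−c₂,b₁−1,b₂+1) + μ₂(b₁+1,b₂−1,0,0) = (\overline{b}+1,\overline{b}−1,a,a), where a, c ∈ ℝ, b ∈ ℂ with (1+\overline{b})(1−b) − ac ≠ 0. Then a = 0, λ₂ = 0, b ≠ ±1, b₁ ≠ ±1, b₂ ≠ ±1, b₂ − b₁ ≠ ±2, and either b₂ = \overline{b₁} or b₂ = −b₁. -/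
open ComplexConjugate

/-- If the boundary-condition row vectors of the maximal domain of `H₀ + B` span the
same subspace as those of the self-adjoint interacting operator `L^I_{(a,b,c)}` (expressed
through the linear relations below), then `a = 0`, `λ₂ = 0`, `b ≠ ±1`, `b₁ ≠ ±1`,
`b₂ ≠ ±1`, `b₂ - b₁ ≠ ±2` and either `b₂ = conj b₁` or `b₂ = -b₁`. -/
theorem row_relations_consequences
    (c₁ c₂ b₁ b₂ l₁ l₂ m₁ m₂ b : ℂ) (a c : ℝ)
    (hreg : (1 + conj b) * (1 - b) - (a : ℂ) * (c : ℂ) ≠ 0)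
    (h11 : l₁ * (-c₁) + m₁ * (b₁ + 1) = -(c : ℂ))
    (h12 : l₁ * (-c₂) + m₁ * (b₂ - 1) = -(c : ℂ))
    (h13 : l₁ * (b₁ - 1) = b - 1)
    (h14 : l₁ * (b₂ + 1) = b + 1)
    (h21 : l₂ * (-c₁) + m₂ * (b₁ + 1) = conj b + 1)
    (h22 : l₂ * (-c₂) + m₂ * (b₂ - 1) = conj b - 1)
    (h23 : l₂ * (b₁ - 1) = (a : ℂ))
    (h24 : l₂ * (b₂ + 1) = (a : ℂ)) :
    a = 0 ∧ l₂ = 0 ∧ b ≠ 1 ∧ b ≠ -1 ∧ b₁ ≠ 1 ∧ b₁ ≠ -1 ∧ b₂ ≠ 1 ∧ b₂ ≠ -1 ∧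
      b₂ - b₁ ≠ 2 ∧ b₂ - b₁ ≠ -2 ∧ (b₂ = conj b₁ ∨ b₂ = -b₁) := by
  -- l₂ = 0
  have e1 : l₂ * (b - 1) = l₁ * (a : ℂ) := by rw [← h13, ← h23]; ring
  have e2 : l₂ * (b + 1) = l₁ * (a : ℂ) := by rw [← h14, ← h24]; ring
  have hl2 : l₂ = 0 := by linear_combination (e2 - e1) / 2
  have ha' : (a : ℂ) = 0 := by rw [← h23, hl2]; ring
  have ha : a = 0 := by exact_mod_cast ha'
  have hreg' : (1 + conj b) * (1 - b) ≠ 0 := by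
    rw [ha'] at hreg; simpa using hreg
  have f2 : (1 : ℂ) + conj b ≠ 0 := fun h => hreg' (by rw [h]; ring)
  have f1 : (1 : ℂ) - b ≠ 0 := fun h => hreg' (by rw [h]; ring)
  have hbne1 : b ≠ 1 := fun h => f1 (by rw [h]; ring)
  have hbnem1 : b ≠ -1 := fun h => f2 (by rw [h]; simp)
  -- simplified second-row equations
  have hm2 : m₂ * (b₁ + 1) = conj b + 1 := by rw [← h21, hl2]; ring
  have hm2' : m₂ * (b₂ - 1) = conj b - 1 := by rw [← h22, hl2]; ring
  have hcb1 : conj b - 1 ≠ 0 := by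
    intro h
    apply f1
    have : conj b = 1 := by linear_combination h
    have := congrArg conj this
    simp at this
    rw [this]; ring
  have hb1ne1 : b₁ ≠ 1 := by
    rintro rfl
    exact hbne1 (by linear_combination -h13)
  have hb2nem1 : b₂ ≠ -1 := by
    rintro rfl
    exact hbnem1 (by linear_combination -h14)
  have hb1nem1 : b₁ ≠ -1 := by
    rintro rfl
    exact f2 (by linear_combination -hm2)
  have hb2ne1 : b₂ ≠ 1 := by
    rintro rfl
    exact hcb1 (by linear_combination -hm2')
  have hd1 : b₂ - b₁ ≠ 2 := by
    intro h
    have h2 : (2 : ℂ) = 0 := by linear_combination hm2' - hm2 - m₂ * h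
    exact two_ne_zero h2
  have hd2 : b₂ - b₁ ≠ -2 := by
    intro h
    have h2 : (2 : ℂ) = 0 := by linear_combination h13 - h14 + l₁ * h
    exact two_ne_zero h2
  -- conjugated second-row equations
  have c1 : conj m₂ * (conj b₁ + 1) = b + 1 := by
    have := congrArg conj hm2
    simpa using this
  have c2 : conj m₂ * (conj b₂ - 1) = b - 1 := by
    have := congrArg conj hm2'
    simpa using this
  have E1 : (b - 1) * (b₂ + 1) = (b + 1) * (b₁ - 1) := by
    linear_combination (b₁ - 1) * h14 - (b₂ + 1) * h13
  have E2 : (b + 1) * (conj b₂ - 1) = (b - 1) * (conj b₁ + 1) := by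
    linear_combination (conj b₁ + 1) * c2 - (conj b₂ - 1) * c1
  have hbm1 : b - 1 ≠ 0 := sub_ne_zero.mpr hbne1
  have hstar : (b₂ + 1) * (conj b₂ - 1) = (b₁ - 1) * (conj b₁ + 1) := by
    apply mul_left_cancel₀ hbm1
    linear_combination (conj b₂ - 1) * E1 + (b₁ - 1) * E2
  -- extract real and imaginary parts
  rw [Complex.ext_iff] at hstar
  obtain ⟨hre, him⟩ := hstar
  simp [Complex.mul_re, Complex.mul_im, Complex.add_re, Complex.add_im,
    Complex.sub_re, Complex.sub_im, Complex.conj_re, Complex.conj_im] at hre him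
  have hy : b₂.im = -b₁.im := by linear_combination -him / 2
  have hx : (b₂.re - b₁.re) * (b₂.re + b₁.re) = 0 := by
    linear_combination hre - (b₂.im - b₁.im) * hy
  have hdich : b₂ = conj b₁ ∨ b₂ = -b₁ := by
    rcases mul_eq_zero.mp hx with h | h
    · left
      apply Complex.ext
      · simpa [Complex.conj_re] using sub_eq_zero.mp h
      · simpa [Complex.conj_im] using hy
    · right
      apply Complex.ext
      · have := add_eq_zero_iff_eq_neg.mp h
        simpa using this
      · simpa using hy
  exact ⟨ha, hl2, hbne1, hbnem1, hb1ne1, hb1nem1, hb2ne1, hb2nem1, hd1, hd2, hdich⟩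
end

section
/- Let b ∈ ℂ with b ≠ ±1 and b + \overline{b} ≠ 0. Define b₁ = (2b\overline{b} + b − \overline{b})/(b + \overline{b}), X₁ = −(b+\overline{b})/4 + (b+\overline{b})/(4\overline{b}), X₂ = (b+\overline{b})/4 + (b+\overline{b})/(4\overline{b}). Then b₁ ≠ ±1, X₁ ≠ 0, X₂ ≠ 0, and (b₁ + \overline{b₁})/(\overline{b₁} − b₁ + 2) = b. -/
/-!
Write `c = conj b` and `s = b + c`, which is real, so `conj s = s`. Then
`b₁ = (2bc + b - c)/s` and `conj b₁ = (2cb + c - b)/s`, hence `b₁ + conj b₁ = 4bc/s` and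
`conj b₁ - b₁ + 2 = 4c/s`, whose quotient is `b`. Clearing denominators, `b₁ = 1` becomes
`2c(b - 1) = 0` and `b₁ = -1` becomes `2b(c + 1) = 0`, while `X₁ = s(1 - c)/(4c)` and
`X₂ = s(1 + c)/(4c)`.
-/

open ComplexConjugate

section Field

variable {K : Type*} [Field K]

/-- The paper's `b₁`, as a function of `b` and `c = conj b`. -/
def boundaryCoeff (b c : K) : K := (2 * b * c + b - c) / (b + c)

variable [CharZero K] {b c s : K}

theorem boundaryCoeff_ne_one (hs : b + c ≠ 0) (hb : b ≠ 1) (hc : c ≠ 0) :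
    boundaryCoeff b c ≠ 1 := by
  rw [boundaryCoeff, Ne, div_eq_one_iff_eq hs]
  intro h
  have hfactor : 2 * c * (b - 1) = 0 := by linear_combination h
  simp [sub_eq_zero, hb, hc] at hfactor

theorem boundaryCoeff_ne_neg_one (hs : b + c ≠ 0) (hb : b ≠ 0) (hc : c ≠ -1) :
    boundaryCoeff b c ≠ -1 := by
  rw [boundaryCoeff, Ne, div_eq_iff hs]
  intro h
  have hfactor : 2 * b * (c + 1) = 0 := by linear_combination h
  simp [add_eq_zero_iff_eq_neg, hb, hc] at hfactor

theorem boundaryCoeff_add_swap_div (hs : b + c ≠ 0) (hc : c ≠ 0) :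
    (boundaryCoeff b c + boundaryCoeff c b) / (boundaryCoeff c b - boundaryCoeff b c + 2) = b := by
  have hnum : boundaryCoeff b c + boundaryCoeff c b = 4 * b * c / (b + c) := by
    unfold boundaryCoeff
    rw [add_comm c b, ← add_div]
    ring
  have hden : boundaryCoeff c b - boundaryCoeff b c + 2 = 4 * c / (b + c) := by
    unfold boundaryCoeff
    rw [add_comm c b]
    field_simp
    ring
  rw [hnum, hden, div_div_div_cancel_right₀ hs]
  field_simp

theorem neg_div_four_add_div_four_mul_ne_zero (hs : s ≠ 0) (hc : c ≠ 0) (hc1 : c ≠ 1) :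
    -(s / 4) + s / (4 * c) ≠ 0 := by
  have hfactor : -(s / 4) + s / (4 * c) = s * (1 - c) / (4 * c) := by
    field_simp
    ring
  rw [hfactor]
  exact div_ne_zero (mul_ne_zero hs (sub_ne_zero.2 hc1.symm)) (mul_ne_zero (by norm_num) hc)

theorem div_four_add_div_four_mul_ne_zero (hs : s ≠ 0) (hc : c ≠ 0) (hc1 : c ≠ -1) :
    s / 4 + s / (4 * c) ≠ 0 := by
  have hfactor : s / 4 + s / (4 * c) = s * (1 + c) / (4 * c) := by
    field_simp
    ring
  rw [hfactor]
  refine div_ne_zero (mul_ne_zero hs ?_) (mul_ne_zero (by norm_num) hc)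
  rwa [add_comm, Ne, add_eq_zero_iff_eq_neg]

end Field

theorem conj_boundaryCoeff {K : Type*} [Field K] [StarRing K] (b : K) :
    conj (boundaryCoeff b (conj b)) = boundaryCoeff (conj b) b := by
  simp only [boundaryCoeff, map_div₀, map_sub, map_add, map_mul, map_ofNat,
    star_star, starRingEnd_apply]

/-- Inversion step in the boundary-potential representation of `L^I_{(0,b,c)}`:
given `b ≠ ±1` with `b + conj b ≠ 0`, and
`b₁ = (2 b conj b + b - conj b)/(b + conj b)`,
`X₁ = -(b + conj b)/4 + (b + conj b)/(4 conj b)`,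
`X₂ = (b + conj b)/4 + (b + conj b)/(4 conj b)`,
one has `b₁ ≠ ±1`, `X₁ ≠ 0`, `X₂ ≠ 0` and `(b₁ + conj b₁)/(conj b₁ - b₁ + 2) = b`. -/
theorem inversion_step (b : ℂ) (hb1 : b ≠ 1) (hb2 : b ≠ -1) (hre : b + conj b ≠ 0) :
    ((2 * b * conj b + b - conj b) / (b + conj b)) ≠ 1 ∧
    ((2 * b * conj b + b - conj b) / (b + conj b)) ≠ -1 ∧
    (-((b + conj b) / 4) + (b + conj b) / (4 * conj b)) ≠ 0 ∧
    ((b + conj b) / 4 + (b + conj b) / (4 * conj b)) ≠ 0 ∧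
    (((2 * b * conj b + b - conj b) / (b + conj b)) +
        conj ((2 * b * conj b + b - conj b) / (b + conj b)))
      / (conj ((2 * b * conj b + b - conj b) / (b + conj b))
          - ((2 * b * conj b + b - conj b) / (b + conj b)) + 2) = b := by
  have hb0 : b ≠ 0 := by
    rintro rfl
    simp at hre
  have hc0 : conj b ≠ 0 := (map_ne_zero _).2 hb0
  have hc1 : conj b ≠ 1 := by simpa using (starRingEnd ℂ).injective.ne hb1
  have hc2 : conj b ≠ -1 := by simpa using (starRingEnd ℂ).injective.ne hb2
  have hsum := boundaryCoeff_add_swap_div hre hc0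
  rw [← conj_boundaryCoeff] at hsum
  exact ⟨boundaryCoeff_ne_one hre hb1 hc0, boundaryCoeff_ne_neg_one hre hb0 hc2,
    neg_div_four_add_div_four_mul_ne_zero hre hc0 hc1,
    div_four_add_div_four_mul_ne_zero hre hc0 hc2, hsum⟩
end
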